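/- Let m be an integer with |m| > 2, A = [[m,1],[-1,0]], Ã = [[0,1],[1,0]], and let Φ₀ be the subgroup of GL(2, ℤ) generated by A, Ã, and −E (E the identity matrix), and Φ = ⟨A⟩ the cyclic subgroup generated by A. Then Φ is normal in Φ₀ and the quotient group Φ₀/Φ is isomorphic to ℤ/2 × ℤ/2. -/

import Mathlib

/-!
Conjugation by `Ã` inverts `A` and `-E` is central, so every generator of `Φ₀` normalises `⟨A⟩`,
and `Φ₀/Φ` is generated by the images of the commuting involutions `Ã` and `-E`; it is therefore
the Klein four-group once `Ã`, `-E` and `-Ã` all lie outside `⟨A⟩`. For `±Ã` the determinant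
(`-1` against `1`) decides. For `-E`: right multiplication by `A` sends a row `(p, q)` to
`(m p - q, p)`, and `|m| ≥ 2` turns `0 < |q| < |p|` into `0 < |p| < |m p - q|`, so the first row
of every positive power of `A` has a nonzero second entry, unlike the first row of `-E`.
-/

open Subgroup

section Klein

variable {Q : Type*} [Group Q] {x y : Q}

lemma Multiplicative.zmod_two_eq_one_or (u : Multiplicative (ZMod 2)) : u = 1 ∨ u = .ofAdd 1 := by
  revert u; decide

def involutionHom (hx : x ^ 2 = 1) : Multiplicative (ZMod 2) →* Q where
  toFun u := x ^ u.toAdd.val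
  map_one' := pow_zero x
  map_mul' u v := by rw [toAdd_mul, ZMod.val_add, ← pow_eq_pow_mod _ hx, pow_add]

@[simp]
lemma involutionHom_ofAdd_one (hx : x ^ 2 = 1) : involutionHom hx (.ofAdd 1) = x := pow_one x

lemma nonempty_mulEquiv_zmod_two_prod_of_closure_eq_top (hx : x ^ 2 = 1) (hy : y ^ 2 = 1)
    (hxy : Commute x y) (hx1 : x ≠ 1) (hy1 : y ≠ 1) (hxy1 : x * y ≠ 1)
    (hgen : closure {x, y} = ⊤) :
    Nonempty (Q ≃* Multiplicative (ZMod 2) × Multiplicative (ZMod 2)) := by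
  have hcomm : ∀ u v, Commute (involutionHom hx u) (involutionHom hy v) := by
    intro u v
    rcases u.zmod_two_eq_one_or with rfl | rfl <;> rcases v.zmod_two_eq_one_or with rfl | rfl <;>
      simp [hxy]
  let φ := (involutionHom hx).noncommCoprod (involutionHom hy) hcomm
  have hφ : ∀ u v, φ (u, v) = involutionHom hx u * involutionHom hy v := fun _ _ ↦ rfl
  have hinj : Function.Injective φ := by
    refine (injective_iff_map_eq_one φ).mpr fun ⟨u, v⟩ h ↦ ?_
    rcases u.zmod_two_eq_one_or with rfl | rfl <;> rcases v.zmod_two_eq_one_or with rfl | rfl <;>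
      simp [hφ, hx1, hy1, hxy1] at h ⊢
  have hsurj : Function.Surjective φ := by
    rw [← MonoidHom.range_eq_top, eq_top_iff, ← hgen, closure_le]
    rintro _ (rfl | rfl)
    exacts [⟨(.ofAdd 1, 1), by simp [hφ]⟩, ⟨(1, .ofAdd 1), by simp [hφ]⟩]
  exact ⟨(MulEquiv.ofBijective φ ⟨hinj, hsurj⟩).symm⟩

end Klein

section Normal

variable {G : Type*} [Group G] {a t z : G}

lemma mem_normalizer_zpowers {g : G} (h : zpowers (g * a * g⁻¹) = zpowers a) :
    g ∈ normalizer (zpowers a) := by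
  rwa [mem_normalizer_iff_map_conj_eq, MonoidHom.map_zpowers]

lemma normal_zpowers_subgroupOf_closure {s : Set G} (ha : a ∈ s)
    (hs : ∀ g ∈ s, zpowers (g * a * g⁻¹) = zpowers a) :
    ((zpowers a).subgroupOf (closure s)).Normal :=
  (normal_subgroupOf_iff_le_normalizer (zpowers_le.mpr (subset_closure ha))).mpr <|
    (closure_le _).mpr fun g hg ↦ mem_normalizer_zpowers (hs g hg)

lemma notMem_zpowers_of_map {H : Type*} [Group H] (f : G →* H) {g : G} (ha : f a = 1)
    (hg : f g ≠ 1) : g ∉ zpowers a :=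
  fun h ↦ hg (zpowers_le (H := f.ker) |>.mpr ha h)

lemma closure_mk_pair_eq_top [((zpowers a).subgroupOf (closure {a, t, z})).Normal] :
    closure {((⟨t, subset_closure (by simp)⟩ : closure {a, t, z}) :
        closure {a, t, z} ⧸ (zpowers a).subgroupOf (closure {a, t, z})),
      ((⟨z, subset_closure (by simp)⟩ : closure {a, t, z}) : _ ⧸ _)} = ⊤ := by
  rw [eq_top_iff, ← map_top_of_surjective _ (QuotientGroup.mk'_surjective _),
    ← closure_closure_coe_preimage, MonoidHom.map_closure, closure_le]
  rintro _ ⟨⟨g, hg⟩, hs, rfl⟩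
  obtain rfl | rfl | rfl : g = a ∨ g = t ∨ g = z := hs
  · rw [SetLike.mem_coe, QuotientGroup.mk'_apply,
      (QuotientGroup.eq_one_iff _).mpr (mem_subgroupOf.mpr (mem_zpowers _))]
    exact one_mem _
  · exact subset_closure (by simp)
  · exact subset_closure (by simp)

lemma nonempty_quotient_zpowers_mulEquiv (ht : t ^ 2 = 1) (hz : z ^ 2 = 1) (htz : Commute t z)
    (ht' : t ∉ zpowers a) (hz' : z ∉ zpowers a) (htz' : t * z ∉ zpowers a)
    [((zpowers a).subgroupOf (closure {a, t, z})).Normal] :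
    Nonempty (closure {a, t, z} ⧸ (zpowers a).subgroupOf (closure {a, t, z}) ≃*
      Multiplicative (ZMod 2) × Multiplicative (ZMod 2)) := by
  set H := closure {a, t, z}
  set N := (zpowers a).subgroupOf H
  have mk_eq_one {g : H} : (g : H ⧸ N) = 1 ↔ (g : G) ∈ zpowers a := by
    rw [QuotientGroup.eq_one_iff, mem_subgroupOf]
  let t' : H := ⟨t, subset_closure (by simp)⟩
  let z' : H := ⟨z, subset_closure (by simp)⟩
  refine nonempty_mulEquiv_zmod_two_prod_of_closure_eq_top (x := (t' : H ⧸ N)) (y := z')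
    ?_ ?_ ?_ (mk_eq_one.not.mpr ht') (mk_eq_one.not.mpr hz') ?_ closure_mk_pair_eq_top
  · rw [← QuotientGroup.mk_pow, mk_eq_one]; simp [t', ht]
  · rw [← QuotientGroup.mk_pow, mk_eq_one]; simp [z', hz]
  · exact (show Commute t' z' from Subtype.ext htz).map (QuotientGroup.mk' N)
  · rw [← QuotientGroup.mk_mul, Ne, mk_eq_one]; exact htz'

end Normal

section GL2

lemma abs_lt_abs_mul_sub {m p q : ℤ} (hm : 2 ≤ |m|) (hqp : |q| < |p|) : |p| < |p * m - q| := by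
  have := abs_sub_abs_le_abs_sub (p * m) q
  rw [abs_mul] at this
  nlinarith [abs_nonneg p]

lemma abs_pow_succ_apply_zero_one_mem_Ioo {m : ℤ} (hm : 2 ≤ |m|) (n : ℕ) :
    |(!![m, 1; -1, 0] ^ (n + 1)) 0 1| ∈ Set.Ioo 0 |(!![m, 1; -1, 0] ^ (n + 1)) 0 0| := by
  induction n with
  | zero => simpa using one_lt_two.trans_le hm
  | succ n ih =>
    have row_mul (B : Matrix (Fin 2) (Fin 2) ℤ) :
        (B * !![m, 1; -1, 0]) 0 0 = B 0 0 * m - B 0 1 ∧ (B * !![m, 1; -1, 0]) 0 1 = B 0 0 := by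
      simp [Matrix.mul_apply, sub_eq_add_neg]
    rw [pow_succ, (row_mul _).1, (row_mul _).2]
    exact ⟨ih.1.trans ih.2, abs_lt_abs_mul_sub hm ih.2⟩

lemma pow_ne_neg_one_of_two_le_abs {m : ℤ} (hm : 2 ≤ |m|) :
    ∀ n : ℕ, (!![m, 1; -1, 0] : Matrix (Fin 2) (Fin 2) ℤ) ^ n ≠ -1
  | 0, h => by simpa using congrFun₂ h 0 0
  | n + 1, h => by simpa [h] using (abs_pow_succ_apply_zero_one_mem_Ioo hm n).1

lemma neg_one_notMem_zpowers_of_two_le_abs {m : ℤ} (hm : 2 ≤ |m|) {A : GL (Fin 2) ℤ}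
    (hA : (A : Matrix (Fin 2) (Fin 2) ℤ) = !![m, 1; -1, 0]) : -1 ∉ zpowers A := by
  have hpow (n : ℕ) : A ^ n ≠ -1 := fun h ↦ pow_ne_neg_one_of_two_le_abs hm n <| by
    rw [← hA, ← Units.val_pow_eq_pow_val, h, Units.val_neg, Units.val_one]
  rintro ⟨k, hk⟩
  obtain ⟨n, rfl | rfl⟩ := Int.eq_nat_or_neg k
  · exact hpow n (by simpa using hk)
  · exact hpow n (by simpa [inv_eq_iff_eq_inv] using hk)

end GL2

/-- Let `Φ₀ ≤ GL(2,ℤ)` be generated by `A = [[m,1],[-1,0]]`, `Ã = [[0,1],[1,0]]` and `-E`,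
with `|m| > 2`, and let `Φ = ⟨A⟩`. Then `Φ` is normal in `Φ₀` and `Φ₀/Φ ≅ ℤ/2 × ℤ/2`. -/
theorem stmt11 (m : ℤ) (hm : 2 < |m|)
    (A Atil NegE : Matrix.GeneralLinearGroup (Fin 2) ℤ)
    (hA : (A : Matrix (Fin 2) (Fin 2) ℤ) = !![m, 1; -1, 0])
    (hAtil : (Atil : Matrix (Fin 2) (Fin 2) ℤ) = !![0, 1; 1, 0])
    (hNegE : (NegE : Matrix (Fin 2) (Fin 2) ℤ) = -1) :
    ((Subgroup.zpowers A).subgroupOf (Subgroup.closure {A, Atil, NegE})).Normal ∧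
    ∀ [inst : ((Subgroup.zpowers A).subgroupOf (Subgroup.closure {A, Atil, NegE})).Normal],
      Nonempty ((Subgroup.closure {A, Atil, NegE} ⧸
          (Subgroup.zpowers A).subgroupOf (Subgroup.closure {A, Atil, NegE})) ≃*
        (Multiplicative (ZMod 2) × Multiplicative (ZMod 2))) := by
  obtain rfl : NegE = -1 := Units.ext (by rw [hNegE, Units.val_neg, Units.val_one])
  have hAtil_sq : Atil ^ 2 = 1 := Units.ext <| by
    rw [Units.val_pow_eq_pow_val, hAtil, sq, Matrix.mul_fin_two, Units.val_one, Matrix.one_fin_two]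
    norm_num
  have hconj : Atil * A * Atil⁻¹ = A⁻¹ := by
    rw [inv_eq_of_mul_eq_one_right (sq Atil ▸ hAtil_sq)]
    refine eq_inv_of_mul_eq_one_left (Units.ext ?_)
    simp only [Units.val_mul, Units.val_one, hA, hAtil, Matrix.mul_fin_two, Matrix.one_fin_two]
    norm_num
  have hdetA : Matrix.GeneralLinearGroup.det A = 1 := Units.ext <| by
    simp [Matrix.GeneralLinearGroup.val_det_apply, hA, Matrix.det_fin_two]
  have hdetAtil : Matrix.GeneralLinearGroup.det Atil ≠ 1 := fun h ↦ by
    simpa [hAtil, Matrix.det_fin_two] using congrArg Units.val h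
  have hdetAtil_neg : Matrix.GeneralLinearGroup.det (Atil * -1) ≠ 1 := fun h ↦ by
    simpa [hAtil, Matrix.det_fin_two] using congrArg Units.val h
  refine ⟨normal_zpowers_subgroupOf_closure (by simp) ?_,
    nonempty_quotient_zpowers_mulEquiv hAtil_sq neg_one_sq (Commute.neg_one_right _)
      (notMem_zpowers_of_map _ hdetA hdetAtil) (neg_one_notMem_zpowers_of_two_le_abs hm.le hA)
      (notMem_zpowers_of_map _ hdetA hdetAtil_neg)⟩
  rintro g (rfl | rfl | rfl)
  · simp
  · rw [hconj, zpowers_inv]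
  · simp
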